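/- arXiv:2109.06535 — 3 statements merged into one kernel-verified Lean document; each statement's English description precedes it below -/
import Mathlib

section
/- Let 0 ≤ k, l ≤ n and let E be a k-dimensional subspace and F an l-dimensional subspace of ℂ^n (with its standard inner product). Then there exist an orthonormal basis (e_i)_{i∈[k]} of E, an orthonormal basis (f_j)_{j∈[l]} of F, and numbers θ_1 ≤ θ_2 ≤ ⋯ ≤ θ_{min(k,l)} in [0, π/2] such that for every i ∈ [k] and j ∈ [l], the inner product ⟨e_i, f_j⟩ equals 0 if i ≠ j and equals cos(θ_i) if i = j. -/
open Module Real
open scoped InnerProductSpace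

/-- `e` is an orthonormal basis of the subspace `E`: an orthonormal family spanning `E`. -/
def IsONBasisOf {n k : ℕ} (E : Submodule ℂ (EuclideanSpace ℂ (Fin n)))
    (e : Fin k → EuclideanSpace ℂ (Fin n)) : Prop :=
  Orthonormal ℂ e ∧ Submodule.span ℂ (Set.range e) = E

/-! The cosines of the principal angles are the singular values of `T = P_E|_F : F → E`, the
orthogonal projection onto `E` restricted to `F`; they are at most `1` because `‖P_E‖ ≤ 1`.
An orthonormal eigenbasis `f` of `T† T`, with eigenvalues sorted decreasingly, has pairwise
orthogonal images `T f_j` of norms `σ_j`. Normalising the nonzero ones and extending them to an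
orthonormal basis `e` of `E` gives `T f_j = σ_j e_j`, and `⟪e_i, f_j⟫ = ⟪e_i, T f_j⟫` because
`e_i ∈ E`. -/

namespace LinearMap

variable {𝕜 E F : Type*} [RCLike 𝕜]
  [NormedAddCommGroup E] [InnerProductSpace 𝕜 E] [FiniteDimensional 𝕜 E]
  [NormedAddCommGroup F] [InnerProductSpace 𝕜 F] [FiniteDimensional 𝕜 F]
  (T : E →ₗ[𝕜] F) {n : ℕ} (hn : finrank 𝕜 E = n)

noncomputable def rightSingularVectors : OrthonormalBasis (Fin n) 𝕜 E :=
  T.isSymmetric_adjoint_comp_self.eigenvectorBasis hn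

theorem inner_apply_rightSingularVectors (i j : Fin n) :
    ⟪T (T.rightSingularVectors hn i), T (T.rightSingularVectors hn j)⟫_𝕜 =
      if i = j then ((T.singularValues i ^ 2 : ℝ) : 𝕜) else 0 := by
  rw [← adjoint_inner_right, ← comp_apply, rightSingularVectors,
    IsSymmetric.apply_eigenvectorBasis, inner_smul_right,
    orthonormal_iff_ite.mp (OrthonormalBasis.orthonormal _)]
  split_ifs with h
  · rw [h, sq_singularValues_fin, mul_one]
  · rw [mul_zero]

theorem norm_apply_rightSingularVectors (i : Fin n) :
    ‖T (T.rightSingularVectors hn i)‖ = T.singularValues i := by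
  have h := T.inner_apply_rightSingularVectors hn i i
  rw [if_pos rfl, inner_self_eq_norm_sq_to_K] at h
  exact (sq_eq_sq₀ (norm_nonneg _) (T.singularValues_nonneg i)).1 (by exact_mod_cast h)

theorem singularValues_le {C : ℝ} (hC : 0 ≤ C) (hT : ∀ x, ‖T x‖ ≤ C * ‖x‖) (i : ℕ) :
    T.singularValues i ≤ C := by
  by_cases hi : i < finrank 𝕜 E
  · calc T.singularValues i = ‖T (T.rightSingularVectors rfl ⟨i, hi⟩)‖ :=
          (T.norm_apply_rightSingularVectors rfl ⟨i, hi⟩).symm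
      _ ≤ C := by simpa using hT (T.rightSingularVectors rfl ⟨i, hi⟩)
  · rw [T.singularValues_of_finrank_le (not_lt.mp hi)]
    exact hC

theorem exists_orthonormalBasis_apply_rightSingularVectors {m : ℕ} (hm : finrank 𝕜 F = m) :
    ∃ e : OrthonormalBasis (Fin m) 𝕜 F, ∀ j : Fin n,
      T (T.rightSingularVectors hn j) =
        if h : (j : ℕ) < m then (T.singularValues j : 𝕜) • e ⟨j, h⟩ else 0 := by
  set r := finrank 𝕜 (range T)
  have hrn : r ≤ n := hn ▸ T.finrank_range_le
  have hrm : r ≤ m := hm ▸ Submodule.finrank_le _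
  have hpos {j : ℕ} (hj : j < r) : (T.singularValues j : 𝕜) ≠ 0 :=
    RCLike.ofReal_ne_zero.mpr (T.singularValues_pos_iff_lt_finrank_range.mpr hj).ne'
  let u : Fin m → F := fun i =>
    if h : (i : ℕ) < r then
      (T.singularValues i : 𝕜)⁻¹ • T (T.rightSingularVectors hn ⟨i, h.trans_le hrn⟩)
    else 0
  have hu : Orthonormal 𝕜 ({i : Fin m | (i : ℕ) < r}.domRestrict u) := by
    rw [orthonormal_iff_ite]
    rintro ⟨i, hi : (i : ℕ) < r⟩ ⟨i', hi' : (i' : ℕ) < r⟩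
    simp only [Set.domRestrict_apply, u, dif_pos hi, dif_pos hi', inner_smul_left,
      inner_smul_right, inner_apply_rightSingularVectors, Fin.mk.injEq, Subtype.mk.injEq,
      Fin.val_inj]
    split_ifs with h
    · subst h
      have := hpos hi
      rw [map_inv₀, RCLike.conj_ofReal]
      push_cast
      field_simp
    · simp
  obtain ⟨e, he⟩ := hu.exists_orthonormalBasis_extension_of_card_eq (by simp [hm])
  refine ⟨e, fun j => ?_⟩
  by_cases hj : (j : ℕ) < r
  · rw [dif_pos (hj.trans_le hrm), he ⟨j, hj.trans_le hrm⟩ hj]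
    simp only [u, dif_pos hj, smul_inv_smul₀ (hpos hj)]
  · have hzero : T.singularValues j = 0 :=
      T.singularValues_eq_zero_iff_le_finrank_range.mpr (not_lt.mp hj)
    rw [norm_eq_zero.mp ((T.norm_apply_rightSingularVectors hn j).trans hzero), hzero]
    split_ifs <;> simp

theorem exists_orthonormalBasis_inner_apply_rightSingularVectors {m : ℕ}
    (hm : finrank 𝕜 F = m) :
    ∃ e : OrthonormalBasis (Fin m) 𝕜 F, ∀ (i : Fin m) (j : Fin n),
      ⟪e i, T (T.rightSingularVectors hn j)⟫_𝕜 =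
        if (i : ℕ) = j then (T.singularValues j : 𝕜) else 0 := by
  obtain ⟨e, he⟩ := T.exists_orthonormalBasis_apply_rightSingularVectors hn hm
  refine ⟨e, fun i j => ?_⟩
  rw [he j]
  split_ifs with hj hij hij <;>
    simp [inner_smul_right, orthonormal_iff_ite.mp e.orthonormal, Fin.ext_iff, hij] at hj ⊢
  exact absurd hj (hij ▸ i.isLt).not_ge

end LinearMap

theorem Submodule.exists_principalAngles {𝕜 V : Type*} [RCLike 𝕜] [NormedAddCommGroup V]
    [InnerProductSpace 𝕜 V] (E F : Submodule 𝕜 V) [FiniteDimensional 𝕜 E]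
    [FiniteDimensional 𝕜 F] {k l : ℕ} (hE : finrank 𝕜 E = k) (hF : finrank 𝕜 F = l) :
    ∃ (θ : ℕ → ℝ) (e : OrthonormalBasis (Fin k) 𝕜 E) (f : OrthonormalBasis (Fin l) 𝕜 F),
      Monotone θ ∧ (∀ i, θ i ∈ Set.Icc 0 (π / 2)) ∧
      ∀ i j, ⟪(e i : V), (f j : V)⟫_𝕜 = if (i : ℕ) = j then (cos (θ j) : 𝕜) else 0 := by
  set T : F →ₗ[𝕜] E := E.orthogonalProjectionOnto.toLinearMap ∘ₗ F.subtype
  have hT : ∀ i, T.singularValues i ≤ 1 := T.singularValues_le zero_le_one fun x => by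
    simpa [T] using E.norm_orthogonalProjectionOnto_apply_le x
  obtain ⟨e, he⟩ := T.exists_orthonormalBasis_inner_apply_rightSingularVectors hF hE
  refine ⟨fun i => arccos (T.singularValues i), e, T.rightSingularVectors hF,
    fun _ _ h => arccos_le_arccos (T.singularValues_antitone h),
    fun i => ⟨arccos_nonneg _, arccos_le_pi_div_two.mpr (T.singularValues_nonneg i)⟩,
    fun i j => ?_⟩
  rw [← E.inner_orthogonalProjectionOnto_eq_of_mem_left]
  refine (he i j).trans ?_
  rw [cos_arccos (by linarith [T.singularValues_nonneg j]) (hT j)]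

theorem OrthonormalBasis.isONBasisOf_coe {n k : ℕ} {E : Submodule ℂ (EuclideanSpace ℂ (Fin n))}
    (b : OrthonormalBasis (Fin k) ℂ E) : IsONBasisOf E fun i => (b i : EuclideanSpace ℂ (Fin n)) :=
  ⟨b.orthonormal.comp_linearIsometry E.subtypeₗᵢ, by
    rw [show Set.range (fun i => (b i : EuclideanSpace ℂ (Fin n))) = E.subtype '' Set.range b from
      (Set.range_comp _ _), Submodule.span_image, ← b.coe_toBasis, b.toBasis.span_eq,
      Submodule.map_subtype_top]⟩

/-- existence of principal angles between a `k`-dimensional subspace `E`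
and an `l`-dimensional subspace `F` of `ℂ^n`. -/
theorem principal_angles_exist {n k l : ℕ}
    (E F : Submodule ℂ (EuclideanSpace ℂ (Fin n)))
    (hE : finrank ℂ E = k) (hF : finrank ℂ F = l) :
    ∃ θ : Fin (min k l) → ℝ,
      Monotone θ ∧ (∀ i, θ i ∈ Set.Icc (0:ℝ) (π/2)) ∧
      ∃ (e : Fin k → EuclideanSpace ℂ (Fin n)) (f : Fin l → EuclideanSpace ℂ (Fin n)),
        IsONBasisOf E e ∧ IsONBasisOf F f ∧
        ∀ (i : Fin k) (j : Fin l),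
          ⟪e i, f j⟫_ℂ =
            if h : (i : ℕ) = (j : ℕ)
            then (Real.cos (θ ⟨i, by have := i.isLt; have := j.isLt; omega⟩) : ℂ)
            else 0 := by
  obtain ⟨θ, e, f, hθ, hθ_mem, he⟩ := E.exists_principalAngles F hE hF
  refine ⟨fun t => θ t, fun _ _ h => hθ h, fun t => hθ_mem t, _, _, e.isONBasisOf_coe,
    f.isONBasisOf_coe, fun i j => ?_⟩
  rw [he]
  split_ifs with h
  · simp [h]
  · rfl
end

section
/- Let E be a k-dimensional and F an l-dimensional subspace of ℂ^n with k ≤ l, let m = dim(E ∩ F), let (θ_i)_{i∈[k−m]} be the nonzero principal angles between E and F, and let P = P_E, Q = P_F. Then the multiset of eigenvalues (with multiplicity) of PQ + QP equals {cos²θ_i − cos θ_i : i ∈ [k−m]} ∪ {0 repeated n−2k+m times} ∪ {cos²θ_i + cos θ_i : i ∈ [k−m]} ∪ {2 repeated m times}. -/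
open Module Real
open scoped InnerProductSpace

/-- The matrix (in the standard basis of `ℂ^n`) of the orthogonal projection onto `E`. -/
noncomputable def projMat {n : ℕ} (E : Submodule ℂ (EuclideanSpace ℂ (Fin n))) :
    Matrix (Fin n) (Fin n) ℂ :=
  Matrix.toEuclideanLin.symm ((E.subtypeL.comp E.orthogonalProjectionOnto).toLinearMap)

/-- `θ : Fin r → ℝ` (with `r = min k l`) is the family of principal angles of `(E, F)`:
nondecreasing, with values in `[0, π/2]`, realized by a pair of orthonormal bases. -/
def IsPrincipalAngles {n : ℕ} (k l : ℕ) (E F : Submodule ℂ (EuclideanSpace ℂ (Fin n)))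
    {r : ℕ} (θ : Fin r → ℝ) : Prop :=
  ∃ _hr : r = min k l, Monotone θ ∧ (∀ i, θ i ∈ Set.Icc (0:ℝ) (π/2)) ∧
    ∃ (e : Fin k → EuclideanSpace ℂ (Fin n)) (f : Fin l → EuclideanSpace ℂ (Fin n)),
      IsONBasisOf E e ∧ IsONBasisOf F f ∧
      ∀ (i : Fin k) (j : Fin l),
        ⟪e i, f j⟫_ℂ =
          if h : (i : ℕ) = (j : ℕ)
          then (Real.cos (θ ⟨i, by have := i.isLt; have := j.isLt; omega⟩) : ℂ)
          else 0

/-- `θ' : Fin r → ℝ` is the family of *nonzero* principal angles of `(E, F)`: the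
principal angles of `(E, F)` are `θ'` preceded by `m` zero angles. -/
def IsNonzeroPrincipalAngles {n : ℕ} (k l : ℕ) (E F : Submodule ℂ (EuclideanSpace ℂ (Fin n)))
    {r : ℕ} (θ' : Fin r → ℝ) : Prop :=
  ∃ θ : Fin (min k l) → ℝ, IsPrincipalAngles k l E F θ ∧
    ∃ m : ℕ, ∃ _hmr : m + r = min k l,
      (∀ i : Fin (min k l), θ i = 0 ↔ (i : ℕ) < m) ∧
      ∀ i : Fin r, θ' i = θ ⟨m + i, by have := i.isLt; omega⟩

/-!
Pick principal vectors: orthonormal bases `e` of `E` and `f` of `F` with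
`⟪e i, f j⟫ = δᵢⱼ cos θᵢ`. Then `P f_i = cos θᵢ • e_i` and `Q e_i = cos θᵢ • f_i`, so
`PQ + QP` maps `e_i ± f_i` to `(cos² θᵢ ± cos θᵢ) • (e_i ± f_i)`. For the `m` zero angles
`e_i = f_i` is an eigenvector for `2`, while the unmatched `f_j` (`j ≥ k`) and `(E ⊔ F)ᗮ` lie in
the kernel. Since `dim (E ⊔ F) = k + l - m`, these vectors are `n` in number and span `ℂⁿ`, so they
form an eigenbasis and the characteristic polynomial splits as claimed.
-/

section Anticommutator

variable {R M : Type*} [CommRing R] [AddCommGroup M] [Module R M] {P Q : Module.End R M}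
  {u w : M} {c : R}

theorem anticomm_apply_add_eq_smul (hPu : P u = u) (hQw : Q w = w) (hQu : Q u = c • w)
    (hPw : P w = c • u) : (P * Q + Q * P) (u + w) = (c ^ 2 + c) • (u + w) := by
  simp only [LinearMap.add_apply, Module.End.mul_apply, map_add, map_smul, hPu, hQw, hQu, hPw]
  module

theorem anticomm_apply_sub_eq_smul (hPu : P u = u) (hQw : Q w = w) (hQu : Q u = c • w)
    (hPw : P w = c • u) : (P * Q + Q * P) (u - w) = (c ^ 2 - c) • (u - w) := by
  simp only [LinearMap.add_apply, Module.End.mul_apply, map_sub, map_smul, hPu, hQw, hQu, hPw]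
  module

end Anticommutator

theorem Module.End.roots_charpoly_of_eigenvectors_span {K W ι : Type*} [Field K] [AddCommGroup W]
    [Module K W] [FiniteDimensional K W] [Fintype ι] [DecidableEq ι] (T : Module.End K W)
    {v : ι → W} {μ : ι → K} (hv : ∀ i, T (v i) = μ i • v i)
    (hspan : ⊤ ≤ Submodule.span K (Set.range v)) (hcard : Fintype.card ι = finrank K W) :
    T.charpoly.roots = Multiset.map μ Finset.univ.val := by
  set b := basisOfTopLeSpanOfCardEqFinrank v hspan hcard
  have hb : ∀ i, b i = v i := congrFun (coe_basisOfTopLeSpanOfCardEqFinrank v hspan hcard)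
  have hdiag : LinearMap.toMatrix b b T = Matrix.diagonal μ := by
    ext i j
    rw [LinearMap.toMatrix_apply, hb, hv, ← hb, map_smul, b.repr_self]
    rcases eq_or_ne i j with rfl | hij
    · simp
    · simp [hij]
  have hroots := Polynomial.roots_multiset_prod_X_sub_C (Multiset.map μ Finset.univ.val)
  rw [Multiset.map_map] at hroots
  rwa [← LinearMap.charpoly_toMatrix T b, hdiag, Matrix.charpoly_diagonal,
    Finset.prod_eq_multiset_prod]

theorem Matrix.charpoly_toLpLin_symm {ι K : Type*} [Fintype ι] [DecidableEq ι] [Field K]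
    (p : ENNReal) (T : Module.End K (WithLp p (ι → K))) :
    ((Matrix.toLpLin p p).symm T).charpoly = T.charpoly := by
  rw [Matrix.toLpLin_eq_toLin, Matrix.toLin_symm, LinearMap.charpoly_toMatrix]

variable {𝕜 V : Type*} [RCLike 𝕜] [NormedAddCommGroup V] [InnerProductSpace 𝕜 V]

theorem Submodule.starProjection_eq_of_inner_eq {ι : Type*} {e : ι → V} {E : Submodule 𝕜 V}
    [E.HasOrthogonalProjection] (hE : span 𝕜 (Set.range e) = E) {x y : V} (hx : x ∈ E)
    (h : ∀ i, ⟪e i, y⟫_𝕜 = ⟪e i, x⟫_𝕜) : E.starProjection y = x := by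
  refine eq_starProjection_of_mem_of_inner_eq_zero hx fun z hz => ?_
  have hortho : E ⟂ (𝕜 ∙ (y - x)) := by
    rw [← hE, isOrtho_span]
    rintro _ ⟨i, rfl⟩ _ rfl
    rw [inner_sub_right, h, sub_self]
  exact inner_left_of_mem_orthogonal hz (hortho.ge (mem_span_singleton_self _))

/-- `(e i, f i)` are pairs of principal vectors of `(E, F)`, and `c i` is the cosine of the
`i`-th principal angle. -/
structure IsPrincipalVectors {k l : ℕ} (E F : Submodule 𝕜 V) (e : Fin k → V) (f : Fin l → V)
    (c : Fin k → ℝ) : Prop where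
  orthonormal_left : Orthonormal 𝕜 e
  span_left : Submodule.span 𝕜 (Set.range e) = E
  orthonormal_right : Orthonormal 𝕜 f
  span_right : Submodule.span 𝕜 (Set.range f) = F
  inner_eq : ∀ i j, ⟪e i, f j⟫_𝕜 = if (i : ℕ) = j then (c i : 𝕜) else 0

section Eigenvectors

variable {k l m d : ℕ}

def anticommEigenvector (e : Fin k → V) (f : Fin l → V) (w : Fin d → V) (hmk : m ≤ k)
    (hkl : k ≤ l) : Fin (k - m) ⊕ Fin (l - k) ⊕ Fin d ⊕ Fin (k - m) ⊕ Fin m → V :=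
  Sum.elim (fun i => e ⟨m + i, by omega⟩ - f ⟨m + i, by omega⟩) <|
  Sum.elim (fun j => f ⟨k + j, by omega⟩) <|
  Sum.elim w <|
  Sum.elim (fun i => e ⟨m + i, by omega⟩ + f ⟨m + i, by omega⟩) fun j => e ⟨j, by omega⟩

def anticommEigenvalue (c : Fin k → ℝ) :
    Fin (k - m) ⊕ Fin (l - k) ⊕ Fin d ⊕ Fin (k - m) ⊕ Fin m → ℝ :=
  Sum.elim (fun i => c ⟨m + i, by omega⟩ ^ 2 - c ⟨m + i, by omega⟩) <|
  Sum.elim 0 <|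
  Sum.elim 0 <|
  Sum.elim (fun i => c ⟨m + i, by omega⟩ ^ 2 + c ⟨m + i, by omega⟩) 2

theorem map_anticommEigenvalue (c : Fin k → ℝ) :
    Multiset.map (fun x => (anticommEigenvalue (l := l) (m := m) (d := d) c x : 𝕜))
        Finset.univ.val =
      Multiset.map (fun i : Fin (k - m) =>
          ((c ⟨m + i, by omega⟩ ^ 2 - c ⟨m + i, by omega⟩ : ℝ) : 𝕜)) Finset.univ.val
        + Multiset.replicate (l - k + d) 0
        + Multiset.map (fun i : Fin (k - m) =>
          ((c ⟨m + i, by omega⟩ ^ 2 + c ⟨m + i, by omega⟩ : ℝ) : 𝕜)) Finset.univ.val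
        + Multiset.replicate m 2 := by
  simp only [← Finset.univ_disjSum_univ, Finset.val_disjSum, Multiset.map_disjSum,
    anticommEigenvalue, Sum.elim_inl, Sum.elim_inr, Multiset.map_const', Pi.ofNat_apply]
  simp [Multiset.replicate_add, add_assoc, RCLike.ofReal_ofNat]

end Eigenvectors

namespace IsPrincipalVectors

variable {k l m d : ℕ} {E F : Submodule 𝕜 V} {e : Fin k → V} {f : Fin l → V} {c : Fin k → ℝ}
  {w : Fin d → V}

theorem left_mem (h : IsPrincipalVectors E F e f c) (i : Fin k) : e i ∈ E :=
  h.span_left ▸ Submodule.subset_span ⟨i, rfl⟩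

theorem right_mem (h : IsPrincipalVectors E F e f c) (j : Fin l) : f j ∈ F :=
  h.span_right ▸ Submodule.subset_span ⟨j, rfl⟩

theorem finrank_left (h : IsPrincipalVectors E F e f c) : finrank 𝕜 E = k := by
  rw [← h.span_left, finrank_span_eq_card h.orthonormal_left.linearIndependent, Fintype.card_fin]

theorem finrank_right (h : IsPrincipalVectors E F e f c) : finrank 𝕜 F = l := by
  rw [← h.span_right, finrank_span_eq_card h.orthonormal_right.linearIndependent,
    Fintype.card_fin]

theorem finrank_inf_le (h : IsPrincipalVectors E F e f c) : finrank 𝕜 ↥(E ⊓ F) ≤ k := by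
  have : FiniteDimensional 𝕜 E :=
    h.span_left ▸ FiniteDimensional.span_of_finite 𝕜 (Set.finite_range e)
  exact h.finrank_left ▸ Submodule.finrank_mono inf_le_left

theorem starProjection_left_apply_left [E.HasOrthogonalProjection]
    (h : IsPrincipalVectors E F e f c) (i : Fin k) : E.starProjection (e i) = e i :=
  E.starProjection_eq_self_iff.mpr (h.left_mem i)

theorem starProjection_right_apply_right [F.HasOrthogonalProjection]
    (h : IsPrincipalVectors E F e f c) (j : Fin l) : F.starProjection (f j) = f j :=
  F.starProjection_eq_self_iff.mpr (h.right_mem j)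

theorem starProjection_left_apply_right_of_lt [E.HasOrthogonalProjection]
    (h : IsPrincipalVectors E F e f c) (j : Fin l) (hj : (j : ℕ) < k) :
    E.starProjection (f j) = (c ⟨j, hj⟩ : 𝕜) • e ⟨j, hj⟩ := by
  refine Submodule.starProjection_eq_of_inner_eq h.span_left
    (E.smul_mem _ (h.left_mem _)) fun i => ?_
  rw [h.inner_eq, inner_smul_right, orthonormal_iff_ite.mp h.orthonormal_left]
  by_cases hij : (i : ℕ) = j
  · obtain rfl : i = ⟨j, hj⟩ := Fin.ext hij
    simp
  · simp [hij, Fin.ext_iff]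

theorem starProjection_left_apply_right_of_le [E.HasOrthogonalProjection]
    (h : IsPrincipalVectors E F e f c) (j : Fin l) (hj : k ≤ j) : E.starProjection (f j) = 0 := by
  refine Submodule.starProjection_eq_of_inner_eq h.span_left E.zero_mem fun i => ?_
  rw [h.inner_eq, if_neg (by omega), inner_zero_right]

theorem starProjection_right_apply_left [F.HasOrthogonalProjection]
    (h : IsPrincipalVectors E F e f c) (i : Fin k) (hi : (i : ℕ) < l) :
    F.starProjection (e i) = (c i : 𝕜) • f ⟨i, hi⟩ := by
  refine Submodule.starProjection_eq_of_inner_eq h.span_right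
    (F.smul_mem _ (h.right_mem _)) fun j => ?_
  rw [← inner_conj_symm, h.inner_eq, inner_smul_right,
    orthonormal_iff_ite.mp h.orthonormal_right]
  by_cases hij : (i : ℕ) = j
  · obtain rfl : j = ⟨i, hi⟩ := Fin.ext hij.symm
    simp
  · simp [hij, Fin.ext_iff, Ne.symm hij]

theorem left_eq_right_of_eq_one (h : IsPrincipalVectors E F e f c) (i : Fin k)
    (hi : (i : ℕ) < l) (hc : c i = 1) : e i = f ⟨i, hi⟩ := by
  rw [← inner_eq_one_iff_of_norm_eq_one (𝕜 := 𝕜) (h.orthonormal_left.1 i)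
    (h.orthonormal_right.1 _), h.inner_eq, if_pos rfl, hc, RCLike.ofReal_one]

theorem anticomm_apply_anticommEigenvector [E.HasOrthogonalProjection]
    [F.HasOrthogonalProjection] (h : IsPrincipalVectors E F e f c) (hmk : m ≤ k) (hkl : k ≤ l)
    (hc : ∀ i : Fin k, (i : ℕ) < m → c i = 1) (hw : ∀ j, w j ∈ (E ⊔ F)ᗮ) (x) :
    (E.starProjection * F.starProjection + F.starProjection * E.starProjection)
        (anticommEigenvector e f w hmk hkl x) =
      (anticommEigenvalue c x : 𝕜) • anticommEigenvector e f w hmk hkl x := by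
  rcases x with i | j | j | i | j
  · have := anticomm_apply_sub_eq_smul (P := E.starProjection.toLinearMap)
      (Q := F.starProjection.toLinearMap) (h.starProjection_left_apply_left ⟨m + i, by omega⟩)
      (h.starProjection_right_apply_right ⟨m + i, by omega⟩)
      (h.starProjection_right_apply_left _ _) (h.starProjection_left_apply_right_of_lt _ _)
    simpa [anticommEigenvector, anticommEigenvalue] using this
  · have hPf := h.starProjection_left_apply_right_of_le ⟨k + j, by omega⟩ (by simp)
    simp [anticommEigenvector, anticommEigenvalue, h.starProjection_right_apply_right, hPf]
  · have hP : E.starProjection (w j) = 0 := E.starProjection_apply_eq_zero_iff.mpr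
      (Submodule.orthogonal_le le_sup_left (hw j))
    have hQ : F.starProjection (w j) = 0 := F.starProjection_apply_eq_zero_iff.mpr
      (Submodule.orthogonal_le le_sup_right (hw j))
    simp [anticommEigenvector, anticommEigenvalue, hP, hQ]
  · have := anticomm_apply_add_eq_smul (P := E.starProjection.toLinearMap)
      (Q := F.starProjection.toLinearMap) (h.starProjection_left_apply_left ⟨m + i, by omega⟩)
      (h.starProjection_right_apply_right ⟨m + i, by omega⟩)
      (h.starProjection_right_apply_left _ _) (h.starProjection_left_apply_right_of_lt _ _)
    simpa [anticommEigenvector, anticommEigenvalue] using this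
  · have hef := h.left_eq_right_of_eq_one ⟨j, by omega⟩ (by dsimp only; omega) (hc _ j.isLt)
    have hQe : F.starProjection (e ⟨j, by omega⟩) = e ⟨j, by omega⟩ := by
      rw [hef, h.starProjection_right_apply_right]
    simp [anticommEigenvector, anticommEigenvalue, hQe, h.starProjection_left_apply_left,
      RCLike.ofReal_ofNat, two_smul]

theorem add_sub_mem_span_anticommEigenvector (h : IsPrincipalVectors E F e f c) (hmk : m ≤ k)
    (hkl : k ≤ l) (hc : ∀ i : Fin k, (i : ℕ) < m → c i = 1) (i : Fin k) :
    e i + f ⟨i, by omega⟩ ∈ Submodule.span 𝕜 (Set.range (anticommEigenvector e f w hmk hkl)) ∧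
      e i - f ⟨i, by omega⟩ ∈ Submodule.span 𝕜 (Set.range (anticommEigenvector e f w hmk hkl)) := by
  set S := Submodule.span 𝕜 (Set.range (anticommEigenvector e f w hmk hkl))
  by_cases hi : (i : ℕ) < m
  · have hmem : e i ∈ S := Submodule.subset_span ⟨.inr <| .inr <| .inr <| .inr ⟨i, hi⟩, rfl⟩
    rw [← h.left_eq_right_of_eq_one i _ (hc i hi), sub_self, ← two_smul 𝕜]
    exact ⟨S.smul_mem _ hmem, S.zero_mem⟩
  · have hsub : e ⟨m + (i - m), by omega⟩ - f ⟨m + (i - m), by omega⟩ ∈ S :=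
      Submodule.subset_span ⟨.inl ⟨i - m, by omega⟩, rfl⟩
    have hadd : e ⟨m + (i - m), by omega⟩ + f ⟨m + (i - m), by omega⟩ ∈ S :=
      Submodule.subset_span ⟨.inr <| .inr <| .inr <| .inl ⟨i - m, by omega⟩, rfl⟩
    simp only [Nat.add_sub_cancel' (not_lt.mp hi)] at hsub hadd
    exact ⟨hadd, hsub⟩

theorem top_le_span_anticommEigenvector [(E ⊔ F).HasOrthogonalProjection]
    (h : IsPrincipalVectors E F e f c) (hmk : m ≤ k) (hkl : k ≤ l)
    (hc : ∀ i : Fin k, (i : ℕ) < m → c i = 1) (hw : Submodule.span 𝕜 (Set.range w) = (E ⊔ F)ᗮ) :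
    ⊤ ≤ Submodule.span 𝕜 (Set.range (anticommEigenvector e f w hmk hkl)) := by
  set S := Submodule.span 𝕜 (Set.range (anticommEigenvector e f w hmk hkl))
  have hE : E ≤ S := by
    rw [← h.span_left, Submodule.span_le]
    rintro _ ⟨i, rfl⟩
    show e i ∈ S
    obtain ⟨hadd, hsub⟩ := h.add_sub_mem_span_anticommEigenvector (w := w) hmk hkl hc i
    convert S.smul_mem (2⁻¹ : 𝕜) (S.add_mem hadd hsub) using 1
    module
  have hF : F ≤ S := by
    rw [← h.span_right, Submodule.span_le]
    rintro _ ⟨j, rfl⟩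
    show f j ∈ S
    by_cases hj : (j : ℕ) < k
    · obtain ⟨hadd, hsub⟩ := h.add_sub_mem_span_anticommEigenvector (w := w) hmk hkl hc ⟨j, hj⟩
      convert S.smul_mem (2⁻¹ : 𝕜) (S.sub_mem hadd hsub) using 1
      simp only [Fin.eta]
      module
    · have hmem : f ⟨k + (j - k), by omega⟩ ∈ S :=
        Submodule.subset_span ⟨.inr <| .inl ⟨j - k, by omega⟩, rfl⟩
      simpa only [Nat.add_sub_cancel' (not_lt.mp hj)] using hmem
  have hG : (E ⊔ F)ᗮ ≤ S := by
    rw [← hw]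
    exact Submodule.span_mono fun _ ⟨j, hj⟩ => ⟨.inr <| .inr <| .inl j, hj⟩
  calc ⊤ = E ⊔ F ⊔ (E ⊔ F)ᗮ := Submodule.sup_orthogonal_of_hasOrthogonalProjection.symm
    _ ≤ S := sup_le (sup_le hE hF) hG

theorem roots_charpoly_anticomm [FiniteDimensional 𝕜 V] (h : IsPrincipalVectors E F e f c)
    (hkl : k ≤ l) (hm : finrank 𝕜 ↥(E ⊓ F) = m) (hc : ∀ i : Fin k, (i : ℕ) < m → c i = 1) :
    (E.starProjection * F.starProjection + F.starProjection * E.starProjection :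
        V →L[𝕜] V).toLinearMap.charpoly.roots =
      Multiset.map (fun i : Fin (k - m) =>
          ((c ⟨m + i, by omega⟩ ^ 2 - c ⟨m + i, by omega⟩ : ℝ) : 𝕜)) Finset.univ.val
        + Multiset.replicate (finrank 𝕜 V + m - 2 * k) 0
        + Multiset.map (fun i : Fin (k - m) =>
          ((c ⟨m + i, by omega⟩ ^ 2 + c ⟨m + i, by omega⟩ : ℝ) : 𝕜)) Finset.univ.val
        + Multiset.replicate m 2 := by
  have hmk : m ≤ k := hm ▸ h.finrank_inf_le
  set G := (E ⊔ F)ᗮ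
  set b := Module.finBasis 𝕜 G
  have hw : Submodule.span 𝕜 (Set.range fun j => (b j : V)) = G := by
    rw [Set.range_comp', Submodule.span_val_image_eq_iff, b.span_eq]
  have hdim : finrank 𝕜 ↥(E ⊔ F) + m = k + l := by
    rw [← hm, Submodule.finrank_sup_add_finrank_inf_eq, h.finrank_left, h.finrank_right]
  have hdimG : finrank 𝕜 ↥(E ⊔ F) + finrank 𝕜 G = finrank 𝕜 V :=
    Submodule.finrank_add_finrank_orthogonal _
  have hcard : Fintype.card (Fin (k - m) ⊕ Fin (l - k) ⊕ Fin (finrank 𝕜 G) ⊕ Fin (k - m) ⊕ Fin m)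
      = finrank 𝕜 V := by
    simp only [Fintype.card_sum, Fintype.card_fin]
    omega
  rw [Module.End.roots_charpoly_of_eigenvectors_span _
      (h.anticomm_apply_anticommEigenvector hmk hkl hc fun j => (b j).2)
      (h.top_le_span_anticommEigenvector hmk hkl hc hw) hcard,
    map_anticommEigenvalue, show l - k + finrank 𝕜 G = finrank 𝕜 V + m - 2 * k by omega]

end IsPrincipalVectors

theorem charpoly_projMat_anticomm {n : ℕ} (E F : Submodule ℂ (EuclideanSpace ℂ (Fin n))) :
    (projMat E * projMat F + projMat F * projMat E).charpoly =
      (E.starProjection * F.starProjection + F.starProjection * E.starProjection :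
        EuclideanSpace ℂ (Fin n) →L[ℂ] EuclideanSpace ℂ (Fin n)).toLinearMap.charpoly := by
  have hproj : ∀ K : Submodule ℂ (EuclideanSpace ℂ (Fin n)),
      projMat K = (Matrix.toLpLinAlgEquiv 2).symm K.starProjection := fun _ => rfl
  rw [hproj, hproj, ← map_mul, ← map_mul, ← map_add, Matrix.toLpLinAlgEquiv_symm_apply,
    Matrix.charpoly_toLpLin_symm]
  rfl

theorem spectrum_anticommutator_general {n k l m : ℕ} (hkl : k ≤ l)
    (E F : Submodule ℂ (EuclideanSpace ℂ (Fin n)))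
    (hm : finrank ℂ ↥(E ⊓ F) = m)
    (θ : Fin (k - m) → ℝ)
    (hθ : IsNonzeroPrincipalAngles k l E F θ) :
    (projMat E * projMat F + projMat F * projMat E).charpoly.roots =
        Multiset.map
          (fun i : Fin (k - m) => ((Real.cos (θ i) ^ 2 - Real.cos (θ i) : ℝ) : ℂ))
          Finset.univ.val
        + Multiset.replicate (n + m - 2 * k) (0 : ℂ)
        + Multiset.map
          (fun i : Fin (k - m) => ((Real.cos (θ i) ^ 2 + Real.cos (θ i) : ℝ) : ℂ))
          Finset.univ.val
        + Multiset.replicate m (2 : ℂ) := by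
  obtain ⟨θ₀, ⟨_, -, -, e, f, ⟨he, hspanE⟩, ⟨hf, hspanF⟩, hef⟩, m', hm'k, hzero, hθ₀⟩ := hθ
  obtain rfl : θ = fun i : Fin (k - m) => θ₀ ⟨m' + i, by omega⟩ := funext hθ₀
  have h : IsPrincipalVectors E F e f fun i => Real.cos (θ₀ ⟨i, by omega⟩) :=
    ⟨he, hspanE, hf, hspanF, fun i j => by rw [hef]; split_ifs <;> rfl⟩
  obtain rfl : m' = m := by have := h.finrank_inf_le; omega
  have hc : ∀ i : Fin k, (i : ℕ) < m' → Real.cos (θ₀ ⟨i, by omega⟩) = 1 := fun i hi => by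
    rw [(hzero _).mpr hi, Real.cos_zero]
  rw [charpoly_projMat_anticomm, h.roots_charpoly_anticomm hkl hm hc, finrank_euclideanSpace_fin]
  rfl

/-- eigenvalues (with multiplicity) of the anticommutator `PQ + QP`, where
`P`, `Q` are the orthogonal projections onto `E`, `F`, in terms of the nonzero principal
angles of `(E, F)`. (Note `n + m - 2*k` is the natural-number form of `n - 2k + m`.) -/
theorem spectrum_anticommutator {n k l m : ℕ} (hkl : k ≤ l) (hln : l ≤ n)
    (E F : Submodule ℂ (EuclideanSpace ℂ (Fin n)))
    (hE : finrank ℂ E = k) (hF : finrank ℂ F = l)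
    (hm : finrank ℂ ↥(E ⊓ F) = m)
    (θ : Fin (k - m) → ℝ)
    (hθ : IsNonzeroPrincipalAngles k l E F θ) :
    (projMat E * projMat F + projMat F * projMat E).charpoly.roots =
        Multiset.map
          (fun i : Fin (k - m) => ((Real.cos (θ i) ^ 2 - Real.cos (θ i) : ℝ) : ℂ))
          Finset.univ.val
        + Multiset.replicate (n + m - 2 * k) (0 : ℂ)
        + Multiset.map
          (fun i : Fin (k - m) => ((Real.cos (θ i) ^ 2 + Real.cos (θ i) : ℝ) : ℂ))
          Finset.univ.val
        + Multiset.replicate m (2 : ℂ) :=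
  spectrum_anticommutator_general hkl E F hm θ hθ
end

section
/- Let E, E' be k-dimensional and F, F' be l-dimensional subspaces of ℂ^n such that the pairs (E,F) and (E',F') have the same principal angles (with multiplicity). Then there exists a unitary operator U on ℂ^n with U(E) = E' and U(F) = F'; consequently, for every polynomial π in two non-commuting variables, the operators π(P_E, P_F) and π(P_{E'}, P_{F'}) have the same multiset of eigenvalues with multiplicity. -/
open Module Real
open scoped InnerProductSpace

/-! Orthonormal bases of `E` and `F` (resp. `E'` and `F'`) realizing the principal angles have
the same Gram matrix, so the map sending the first pair of bases to the second extends to a unitary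
`U` of `ℂ^n`, which then maps `E` to `E'` and `F` to `F'`. Conjugation by `U` is an algebra
automorphism sending `P_E, P_F` to `P_{E'}, P_{F'}`, hence `π(P_E, P_F)` to `π(P_{E'}, P_{F'})`,
and conjugate matrices have the same characteristic polynomial. -/

section LinearIsometryExtension

variable {𝕜 H : Type*} [RCLike 𝕜] [NormedAddCommGroup H] [InnerProductSpace 𝕜 H]
  [FiniteDimensional 𝕜 H]

theorem exists_linearIsometryEquiv_apply_eq_of_norm_eq {X : Type*} [AddCommGroup X] [Module 𝕜 X]
    (A A' : X →ₗ[𝕜] H) (hA : ∀ x, ‖A' x‖ = ‖A x‖) :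
    ∃ U : H ≃ₗᵢ[𝕜] H, ∀ x, U (A x) = A' x := by
  obtain ⟨s, hs⟩ := A.rangeRestrict.exists_rightInverse_of_surjective A.range_rangeRestrict
  -- `‖A' x‖ = ‖A x‖` gives `ker A ≤ ker A'`, so `A' ∘ s` does not depend on the chosen preimage.
  have hψ : ∀ x, A' (s (A.rangeRestrict x)) = A' x := by
    intro x
    have hker : A (s (A.rangeRestrict x) - x) = 0 := by
      rw [map_sub, sub_eq_zero]
      exact congrArg Subtype.val (LinearMap.congr_fun hs (A.rangeRestrict x))
    rw [← sub_eq_zero, ← map_sub, ← norm_eq_zero, hA, hker, norm_zero]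
  let S : LinearMap.range A →ₗᵢ[𝕜] H :=
    { toLinearMap := A' ∘ₗ s
      norm_map' := by
        rintro ⟨_, x, rfl⟩
        exact (congrArg norm (hψ x)).trans (hA x) }
  refine ⟨S.extend.toLinearIsometryEquiv rfl, fun x => ?_⟩
  exact (S.extend_apply (A.rangeRestrict x)).trans (hψ x)

theorem exists_linearIsometryEquiv_apply_eq_of_inner_eq {ι : Type*} [Fintype ι] (g g' : ι → H)
    (hg : ∀ i j, ⟪g i, g j⟫_𝕜 = ⟪g' i, g' j⟫_𝕜) :
    ∃ U : H ≃ₗᵢ[𝕜] H, ∀ i, U (g i) = g' i := by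
  classical
  set A := Fintype.linearCombination 𝕜 g
  set A' := Fintype.linearCombination 𝕜 g'
  have hinner : ∀ c, ⟪A' c, A' c⟫_𝕜 = ⟪A c, A c⟫_𝕜 := by
    intro c
    simp only [A, A', Fintype.linearCombination_apply, sum_inner, inner_sum, inner_smul_left,
      inner_smul_right, hg]
  obtain ⟨U, hU⟩ := exists_linearIsometryEquiv_apply_eq_of_norm_eq A A' fun c => by
    have h := hinner c
    rw [inner_self_eq_norm_sq_to_K, inner_self_eq_norm_sq_to_K] at h
    exact (pow_left_inj₀ (norm_nonneg _) (norm_nonneg _) two_ne_zero).mp (by exact_mod_cast h)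
  exact ⟨U, fun i => by simpa [A, A'] using hU (Pi.single i 1)⟩

end LinearIsometryExtension

theorem inner_sum_elim_eq_of_orthonormal {𝕜 H : Type*} [RCLike 𝕜] [NormedAddCommGroup H]
    [InnerProductSpace 𝕜 H] {ι κ : Type*} {e e' : ι → H} {f f' : κ → H}
    (he : Orthonormal 𝕜 e) (he' : Orthonormal 𝕜 e') (hf : Orthonormal 𝕜 f)
    (hf' : Orthonormal 𝕜 f') (hef : ∀ i j, ⟪e i, f j⟫_𝕜 = ⟪e' i, f' j⟫_𝕜) (a b : ι ⊕ κ) :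
    ⟪Sum.elim e f a, Sum.elim e f b⟫_𝕜 = ⟪Sum.elim e' f' a, Sum.elim e' f' b⟫_𝕜 := by
  classical
  rcases a with i | i <;> rcases b with j | j
  · simp only [Sum.elim_inl, orthonormal_iff_ite.mp he, orthonormal_iff_ite.mp he']
  · exact hef i j
  · simp only [Sum.elim_inr, Sum.elim_inl]
    rw [← inner_conj_symm, hef, inner_conj_symm]
  · simp only [Sum.elim_inr, orthonormal_iff_ite.mp hf, orthonormal_iff_ite.mp hf']

theorem IsONBasisOf.map_eq_of_apply_eq {n k : ℕ}
    {E E' : Submodule ℂ (EuclideanSpace ℂ (Fin n))} {e e' : Fin k → EuclideanSpace ℂ (Fin n)}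
    (he : IsONBasisOf E e) (he' : IsONBasisOf E' e')
    {T : EuclideanSpace ℂ (Fin n) →ₗ[ℂ] EuclideanSpace ℂ (Fin n)} (hT : ∀ i, T (e i) = e' i) :
    E.map T = E' := by
  rw [← he.2, ← he'.2, Submodule.map_span, ← Set.range_comp]
  exact congrArg (fun v => Submodule.span ℂ (Set.range v)) (funext hT)

theorem Matrix.exists_mem_unitaryGroup_toEuclideanLin_eq {𝕜 ι : Type*} [RCLike 𝕜] [Fintype ι]
    [DecidableEq ι] (U : EuclideanSpace 𝕜 ι ≃ₗᵢ[𝕜] EuclideanSpace 𝕜 ι) :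
    ∃ M ∈ Matrix.unitaryGroup ι 𝕜, Matrix.toEuclideanLin M = U.toLinearEquiv.toLinearMap := by
  refine ⟨(Matrix.toEuclideanCLM (n := ι) (𝕜 := 𝕜)).symm (Unitary.linearIsometryEquiv.symm U).val,
    Unitary.map_mem _ (Unitary.linearIsometryEquiv.symm U).prop, ?_⟩
  rw [← Matrix.coe_toEuclideanCLM_eq_toEuclideanLin, StarAlgEquiv.apply_symm_apply]
  rfl

theorem toEuclideanCLM_projMat {n : ℕ} (W : Submodule ℂ (EuclideanSpace ℂ (Fin n))) :
    Matrix.toEuclideanCLM (n := Fin n) (𝕜 := ℂ) (projMat W) = W.starProjection :=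
  ContinuousLinearMap.coe_injective (Matrix.toEuclideanLin.apply_symm_apply _)

theorem projMat_map_toEuclideanLin {n : ℕ} {M : Matrix (Fin n) (Fin n) ℂ}
    (hM : M ∈ Matrix.unitaryGroup (Fin n) ℂ) (W : Submodule ℂ (EuclideanSpace ℂ (Fin n))) :
    projMat (W.map (Matrix.toEuclideanLin M)) = M * projMat W * star M := by
  let U := Unitary.linearIsometryEquiv
    ⟨Matrix.toEuclideanCLM (n := Fin n) (𝕜 := ℂ) M, Unitary.map_mem _ hM⟩
  apply EquivLike.injective (Matrix.toEuclideanCLM (n := Fin n) (𝕜 := ℂ))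
  ext1 x
  rw [map_mul, map_mul, map_star, toEuclideanCLM_projMat, toEuclideanCLM_projMat]
  exact Submodule.starProjection_map_apply U W x

theorem Matrix.charpoly_freeAlgebraLift_eq_of_unitary_conj {R m X : Type*} [CommRing R]
    [StarRing R] [Fintype m] [DecidableEq m] {a b : X → Matrix m m R}
    (u : Matrix.unitaryGroup m R) (hab : ∀ i, b i = u * a i * star (u : Matrix m m R))
    (p : FreeAlgebra R X) :
    (FreeAlgebra.lift R b p).charpoly = (FreeAlgebra.lift R a p).charpoly := by
  let c : Matrix m m R →ₐ[R] Matrix m m R := (Unitary.conjStarAlgAut R _ u).toAlgEquiv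
  have hc : ∀ x, c x = u * x * star (u : Matrix m m R) := fun _ => rfl
  have hlift : FreeAlgebra.lift R b = c.comp (FreeAlgebra.lift R a) :=
    FreeAlgebra.hom_ext (funext fun i => by simp [hab, hc])
  rw [hlift, AlgHom.comp_apply, hc, Matrix.charpoly_mul_comm, ← mul_assoc,
    Unitary.star_mul_self_of_mem u.prop, one_mul]

theorem unitary_equivalence_of_same_principal_angles_general {n k l : ℕ}
    (E E' F F' : Submodule ℂ (EuclideanSpace ℂ (Fin n)))
    (hangles : ∃ θ : Fin (min k l) → ℝ,
      IsPrincipalAngles k l E F θ ∧ IsPrincipalAngles k l E' F' θ) :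
    (∃ U ∈ Matrix.unitaryGroup (Fin n) ℂ,
        Submodule.map (Matrix.toEuclideanLin U) E = E' ∧
        Submodule.map (Matrix.toEuclideanLin U) F = F') ∧
    ∀ p : FreeAlgebra ℂ (Fin 2),
      ((FreeAlgebra.lift ℂ ![projMat E, projMat F]) p).charpoly.roots =
      ((FreeAlgebra.lift ℂ ![projMat E', projMat F']) p).charpoly.roots := by
  obtain ⟨θ, ⟨_, _, _, e, f, he, hf, hef⟩, ⟨_, _, _, e', f', he', hf', hef'⟩⟩ := hangles
  obtain ⟨U, hU⟩ := exists_linearIsometryEquiv_apply_eq_of_inner_eq (Sum.elim e f)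
    (Sum.elim e' f') <| inner_sum_elim_eq_of_orthonormal he.1 he'.1 hf.1 hf'.1 fun i j =>
      (hef i j).trans (hef' i j).symm
  obtain ⟨M, hM, hMU⟩ := Matrix.exists_mem_unitaryGroup_toEuclideanLin_eq U
  have hME : E.map (Matrix.toEuclideanLin M) = E' :=
    he.map_eq_of_apply_eq he' fun i => by simpa [hMU] using hU (.inl i)
  have hMF : F.map (Matrix.toEuclideanLin M) = F' :=
    hf.map_eq_of_apply_eq hf' fun i => by simpa [hMU] using hU (.inr i)
  refine ⟨⟨M, hM, hME, hMF⟩, fun p => ?_⟩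
  rw [← hME, ← hMF, projMat_map_toEuclideanLin hM, projMat_map_toEuclideanLin hM]
  refine congrArg Polynomial.roots
    (Matrix.charpoly_freeAlgebraLift_eq_of_unitary_conj ⟨M, hM⟩ (fun i => ?_) p).symm
  fin_cases i <;> rfl

/-- if the pairs `(E, F)` and `(E', F')` of subspaces of `ℂ^n` (of dimensions
`k` and `l`) have the same principal angles (with multiplicity), then some unitary `U` maps
`E` to `E'` and `F` to `F'`; consequently every polynomial `π` in two non-commuting variables
(element of the free algebra on two generators) satisfies that `π(P_E, P_F)` and
`π(P_{E'}, P_{F'})` have the same multiset of eigenvalues with multiplicity. -/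
theorem unitary_equivalence_of_same_principal_angles {n k l : ℕ}
    (E E' F F' : Submodule ℂ (EuclideanSpace ℂ (Fin n)))
    (hE : finrank ℂ E = k) (hE' : finrank ℂ E' = k)
    (hF : finrank ℂ F = l) (hF' : finrank ℂ F' = l)
    (hangles : ∃ θ : Fin (min k l) → ℝ,
      IsPrincipalAngles k l E F θ ∧ IsPrincipalAngles k l E' F' θ) :
    (∃ U ∈ Matrix.unitaryGroup (Fin n) ℂ,
        Submodule.map (Matrix.toEuclideanLin U) E = E' ∧
        Submodule.map (Matrix.toEuclideanLin U) F = F') ∧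
    ∀ p : FreeAlgebra ℂ (Fin 2),
      ((FreeAlgebra.lift ℂ ![projMat E, projMat F]) p).charpoly.roots =
      ((FreeAlgebra.lift ℂ ![projMat E', projMat F']) p).charpoly.roots :=
  unitary_equivalence_of_same_principal_angles_general E E' F F' hangles
end
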